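/- Let f : ℝ → ℝ be a measurable function with f(t) ≥ 0 for all t > 0, let λ > 0 be a real number, and suppose the function t ↦ t·f(t) is integrable on (0, ∞). Define ρ_x = λ·∫_0^x t·f(t) dt for x ≥ 0 and ρ = λ·∫_0^∞ t·f(t) dt, and assume ρ < 1. Then ∫_0^∞ (x·f(x))/(1 − ρ_x) dx = (1/λ)·ln(1/(1 − ρ)). -/
import Mathlib


open MeasureTheory

/-- Change-of-variables integral evaluation from the proof of Theorem 1.2:
if `f` is a nonnegative measurable density on `(0,∞)` with `t·f(t)` integrable,
`λ > 0`, `ρ_x = λ·∫_0^x t·f(t) dt`, and `ρ = λ·∫_0^∞ t·f(t) dt < 1`, then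
`∫_0^∞ x·f(x)/(1 − ρ_x) dx = (1/λ)·ln(1/(1 − ρ))`. -/
theorem stmt_5 (f : ℝ → ℝ) (hf : Measurable f) (hf0 : ∀ t > (0 : ℝ), 0 ≤ f t)
    (lam : ℝ) (hlam : 0 < lam)
    (hint : IntegrableOn (fun t => t * f t) (Set.Ioi (0 : ℝ)))
    (ρ : ℝ → ℝ) (hρ : ∀ x, ρ x = lam * ∫ t in (0 : ℝ)..x, t * f t)
    (ρtot : ℝ) (hρtot : ρtot = lam * ∫ t in Set.Ioi (0 : ℝ), t * f t)
    (hρ1 : ρtot < 1) :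
    ∫ x in Set.Ioi (0 : ℝ), x * f x / (1 - ρ x)
      = (1 / lam) * Real.log (1 / (1 - ρtot)) := by
  have hlam' : lam ≠ 0 := ne_of_gt hlam
  set φ : ℝ → ℝ := (Set.Ioi (0:ℝ)).indicator (fun t => lam * (t * f t)) with hφdef
  have hφmeas : Measurable φ :=
    ((measurable_id.mul hf).const_mul lam).indicator measurableSet_Ioi
  have hφnn : ∀ x, 0 ≤ φ x := by
    intro x
    by_cases hx : x ∈ Set.Ioi (0:ℝ)
    · rw [hφdef, Set.indicator_of_mem hx]
      exact mul_nonneg hlam.le (mul_nonneg (le_of_lt hx) (hf0 x hx))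
    · rw [hφdef, Set.indicator_of_notMem hx]
  have hφint : Integrable φ := MeasureTheory.IntegrableOn.integrable_indicator (hint.const_mul lam) measurableSet_Ioi
  -- key rewriting of set integrals of φ
  have key : ∀ s : Set ℝ,
      ∫ t in s, φ t = ∫ t in s ∩ Set.Ioi 0, lam * (t * f t) := by
    intro s
    rw [hφdef]
    exact setIntegral_indicator measurableSet_Ioi
  set F : ℝ → ℝ := fun x => ∫ t in (0:ℝ)..x, φ t with hFdef
  have hφII : ∀ a b : ℝ, IntervalIntegrable φ volume a b := fun a b =>
    hφint.intervalIntegrable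
  have hFcont : Continuous F := intervalIntegral.continuous_primitive hφII 0
  have hFIoc : ∀ x : ℝ, 0 ≤ x → F x = ∫ t in Set.Ioc 0 x, φ t := by
    intro x hx
    rw [hFdef]
    exact intervalIntegral.integral_of_le hx
  have hFmono : Monotone F := by
    intro x y hxy
    have h1 := intervalIntegral.integral_add_adjacent_intervals (hφII 0 x) (hφII x y)
    have h2 : (0:ℝ) ≤ ∫ t in x..y, φ t :=
      intervalIntegral.integral_nonneg hxy (fun u _ => hφnn u)
    rw [hFdef]
    simp only
    linarith [h1]
  have hF0 : ∀ x : ℝ, x ≤ 0 → F x = 0 := by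
    intro x hx
    rw [hFdef]
    simp only
    rw [intervalIntegral.integral_of_ge hx, key]
    have : Set.Ioc x 0 ∩ Set.Ioi 0 = ∅ := by
      ext u
      simp only [Set.mem_inter_iff, Set.mem_Ioc, Set.mem_Ioi, Set.mem_empty_iff_false,
        iff_false, not_and]
      rintro ⟨_, hu2⟩ hu3
      linarith
    rw [this]
    simp
  have hFnn : ∀ x, 0 ≤ F x := by
    intro x
    rcases le_or_gt x 0 with h | h
    · rw [hF0 x h]
    · rw [← hF0 0 le_rfl]
      exact hFmono h.le
  have hFρ : ∀ x : ℝ, 0 < x → F x = ρ x := by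
    intro x hx
    rw [hFIoc x hx.le, key, Set.inter_eq_self_of_subset_left Set.Ioc_subset_Ioi_self,
      hρ x, intervalIntegral.integral_of_le hx.le, integral_const_mul]
  have hρtot0 : 0 ≤ ρtot := by
    rw [hρtot]
    exact mul_nonneg hlam.le (setIntegral_nonneg measurableSet_Ioi fun t ht =>
      mul_nonneg (le_of_lt ht) (hf0 t ht))
  have hIoiφ : ∫ t in Set.Ioi (0:ℝ), φ t = ρtot := by
    rw [key, Set.inter_self, integral_const_mul, hρtot]
  have hφtot : ∫ t, φ t = ρtot := by
    rw [hφdef, integral_indicator measurableSet_Ioi, integral_const_mul, hρtot]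
  have hFtot : ∀ x, F x ≤ ρtot := by
    intro x
    rcases le_or_gt x 0 with h | h
    · rw [hF0 x h]; exact hρtot0
    · rw [hFIoc x h.le, ← hIoiφ]
      exact setIntegral_mono_set hφint.integrableOn (ae_of_all _ hφnn)
        (HasSubset.Subset.eventuallyLE Set.Ioc_subset_Ioi_self)
  have hFtend : Filter.Tendsto F Filter.atTop (nhds ρtot) := by
    have := MeasureTheory.intervalIntegral_tendsto_integral_Ioi 0
      hφint.integrableOn Filter.tendsto_id
    rw [hIoiφ] at this
    exact this
  -- the measure with density φ
  set μ : Measure ℝ := volume.withDensity (fun t => ENNReal.ofReal (φ t)) with hμdef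
  have hμIic : ∀ c : ℝ, μ (Set.Iic c) = ENNReal.ofReal (F c) := by
    intro c
    rw [hμdef, withDensity_apply _ measurableSet_Iic,
      ← ofReal_integral_eq_lintegral_ofReal hφint.integrableOn (ae_of_all _ hφnn)]
    congr 1
    rcases le_or_gt 0 c with hc | hc
    · rw [key, hFIoc c hc, key, Set.inter_eq_self_of_subset_left Set.Ioc_subset_Ioi_self]
      congr 1
      rw [Set.inter_comm, Set.Ioi_inter_Iic]
    · rw [key, hF0 c hc.le]
      have : Set.Iic c ∩ Set.Ioi 0 = ∅ := by
        ext u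
        simp only [Set.mem_inter_iff, Set.mem_Iic, Set.mem_Ioi, Set.mem_empty_iff_false,
          iff_false, not_and]
        intro hu1 hu2
        linarith
      rw [this]
      simp
  have hμuniv : μ Set.univ = ENNReal.ofReal ρtot := by
    rw [hμdef, withDensity_apply _ MeasurableSet.univ, Measure.restrict_univ,
      ← ofReal_integral_eq_lintegral_ofReal hφint (ae_of_all _ hφnn), hφtot]
  have hμfin : IsFiniteMeasure μ := by
    constructor
    rw [hμuniv]
    exact ENNReal.ofReal_lt_top
  have hFmeas : Measurable F := hFcont.measurable
  -- the pushforward of μ under F is Lebesgue measure on (0, ρtot]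
  have hmap : μ.map F = volume.restrict (Set.Ioc 0 ρtot) := by
    refine MeasureTheory.Measure.ext_of_Iic _ _ (fun y => ?_)
    rw [Measure.map_apply hFmeas measurableSet_Iic, Measure.restrict_apply measurableSet_Iic]
    rcases lt_or_ge y 0 with hy | hy
    · have h1 : F ⁻¹' Set.Iic y = ∅ := by
        ext x
        simp only [Set.mem_preimage, Set.mem_Iic, Set.mem_empty_iff_false, iff_false, not_le]
        exact lt_of_lt_of_le hy (hFnn x)
      have h2 : Set.Iic y ∩ Set.Ioc 0 ρtot = ∅ := by
        apply Set.eq_empty_iff_forall_notMem.2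
        rintro u ⟨hu1, hu2, _⟩
        exact absurd hu2 (not_lt.2 (le_trans (Set.mem_Iic.1 hu1) hy.le))
      rw [h1, h2]
      simp
    rcases lt_or_ge y ρtot with hy2 | hy2
    · set S := {x : ℝ | F x ≤ y} with hSdef
      have hS0 : (0:ℝ) ∈ S := by
        simp only [hSdef, Set.mem_setOf_eq, hF0 0 le_rfl]
        exact hy
      have hbdd : BddAbove S := by
        obtain ⟨B, hB⟩ := Filter.eventually_atTop.1 (hFtend.eventually (eventually_gt_nhds hy2))
        refine ⟨B, fun x hx => ?_⟩
        by_contra h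
        push_neg at h
        exact absurd hx (not_le.2 (hB x h.le))
      have hSclosed : IsClosed S := isClosed_le hFcont continuous_const
      set c := sSup S with hcdef
      have hcS : F c ≤ y := hSclosed.csSup_mem ⟨0, hS0⟩ hbdd
      have hFc : F c = y := by
        by_contra h
        have hlt : F c < y := lt_of_le_of_ne hcS h
        have hev : ∀ᶠ x in nhds c, F x < y :=
          (hFcont.tendsto c).eventually (eventually_lt_nhds hlt)
        obtain ⟨x, hxc, hxy⟩ := hev.exists_gt
        exact absurd (le_csSup hbdd (le_of_lt hxy : F x ≤ y)) (not_le.2 hxc)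
      have hSIic : F ⁻¹' Set.Iic y = Set.Iic c := by
        ext x
        constructor
        · exact fun hx => le_csSup hbdd hx
        · exact fun hx => le_trans (hFmono hx) hcS
      have h2 : Set.Iic y ∩ Set.Ioc 0 ρtot = Set.Ioc 0 y := by
        ext u
        simp only [Set.mem_inter_iff, Set.mem_Iic, Set.mem_Ioc]
        constructor
        · rintro ⟨h1, h2, _⟩; exact ⟨h2, h1⟩
        · rintro ⟨h1, h2⟩; exact ⟨h2, h1, le_trans h2 hy2.le⟩
      rw [hSIic, hμIic, hFc, h2, Real.volume_Ioc, sub_zero]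
    · have h1 : F ⁻¹' Set.Iic y = Set.univ := by
        ext x
        simp only [Set.mem_preimage, Set.mem_Iic, Set.mem_univ, iff_true]
        exact le_trans (hFtot x) hy2
      have h2 : Set.Iic y ∩ Set.Ioc 0 ρtot = Set.Ioc 0 ρtot :=
        Set.inter_eq_self_of_subset_right (fun u hu => le_trans hu.2 hy2)
      rw [h1, hμuniv, h2, Real.volume_Ioc, sub_zero]
  -- now the computation
  have step1 : ∫ x in Set.Ioi (0:ℝ), x * f x / (1 - ρ x)
      = (1 / lam) * ∫ x in Set.Ioi (0:ℝ), φ x * (1 - F x)⁻¹ := by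
    rw [← integral_const_mul]
    refine setIntegral_congr_fun measurableSet_Ioi (fun x hx => ?_)
    rw [hFρ x hx, hφdef, Set.indicator_of_mem hx]
    field_simp
  have step2 : ∫ x in Set.Ioi (0:ℝ), φ x * (1 - F x)⁻¹
      = ∫ x, φ x * (1 - F x)⁻¹ := by
    rw [← integral_indicator measurableSet_Ioi]
    congr 1
    ext x
    by_cases hx : x ∈ Set.Ioi (0:ℝ)
    · rw [Set.indicator_of_mem hx]
    · rw [Set.indicator_of_notMem hx, hφdef, Set.indicator_of_notMem hx, zero_mul]
  have step3 : ∫ x, φ x * (1 - F x)⁻¹ = ∫ x, (1 - F x)⁻¹ ∂μ := by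
    have hmeas : Measurable fun x => (φ x).toNNReal := hφmeas.real_toNNReal
    have : μ = volume.withDensity (fun x => ((φ x).toNNReal : ENNReal)) := by
      rw [hμdef]
      congr 1
    rw [this, integral_withDensity_eq_integral_smul hmeas]
    refine integral_congr_ae (ae_of_all _ fun x => ?_)
    simp only [NNReal.smul_def, Real.coe_toNNReal _ (hφnn x), smul_eq_mul]
  have step4 : ∫ x, (1 - F x)⁻¹ ∂μ = ∫ u in Set.Ioc 0 ρtot, (1 - u)⁻¹ := by
    rw [← hmap, integral_map hFmeas.aemeasurable]
    exact ((measurable_const.sub measurable_id).inv).aestronglyMeasurable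
  have step5 : ∫ u in Set.Ioc 0 ρtot, (1 - u)⁻¹ = Real.log (1 / (1 - ρtot)) := by
    rw [← intervalIntegral.integral_of_le hρtot0]
    have := intervalIntegral.integral_comp_sub_left (a := (0:ℝ)) (b := ρtot)
      (fun u => u⁻¹) 1
    have h0 : (0:ℝ) ∉ Set.uIcc (1 - ρtot) 1 := by
      intro h
      rcases Set.mem_uIcc.1 h with ⟨h1, _⟩ | ⟨_, h2⟩
      · linarith
      · linarith
    rw [this, sub_zero, integral_inv h0]
  rw [step1, step2, step3, step4, step5]
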